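/- arXiv:2405.19969 — 8 statements merged into one kernel-verified Lean document; each statement's English description precedes it below -/
import Mathlib

section
/- For all complex z = z_r + i z_i with z_r ≤ 0, the modulus of R(z) = (1 + i z_i)/(1 - z_r + z_i²/2) is at most 1. -/
/-- A-stability of the SI1(1) integrator: for all complex `z` with `z.re ≤ 0`,
the modulus of `R(z) = (1 + I*z.im) / (1 - z.re + z.im^2/2)` is at most 1. -/
theorem stmt_0 (z : ℂ) (hz : z.re ≤ 0) :
    ‖(1 + Complex.I * (z.im : ℂ)) / ((1 : ℂ) - (z.re : ℂ) + (z.im : ℂ)^2 / 2)‖ ≤ 1 := by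
  set x := z.re
  set y := z.im
  have hden : ((1:ℂ) - (x:ℂ) + (y:ℂ)^2/2) = ((1 - x + y^2/2 : ℝ) : ℂ) := by push_cast; ring
  rw [hden, norm_div, Complex.norm_real, Real.norm_eq_abs]
  have hd : (1:ℝ) ≤ 1 - x + y^2/2 := by nlinarith [sq_nonneg y]
  have hd0 : (0:ℝ) < 1 - x + y^2/2 := by linarith
  rw [div_le_one (by rwa [abs_of_pos hd0])]
  rw [abs_of_pos hd0]
  have hsq : ‖1 + Complex.I * (y:ℂ)‖^2 = 1 + y^2 := by
    rw [Complex.sq_norm, Complex.normSq_apply]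
    simp; ring
  nlinarith [norm_nonneg (1 + Complex.I * (y:ℂ)), sq_nonneg y, sq_nonneg (x - y^2/2)]
end

section
/- For R(z) = (1 + i z_i)/(1 - z_r + z_i²/2), R(z) → 0 as |z| → ∞ along any path in the left half-plane {z : Re(z) ≤ 0}; in particular for any sequence z_n with Re(z_n) ≤ 0 and |z_n| → ∞, |R(z_n)| → 0. -/
lemma key (x y ε : ℝ) (hx : x ≤ 0) (hε : 0 < ε) (hε1 : ε ≤ 1)
    (hr : 64 ≤ ε^4 * (x^2 + y^2)) :
    Real.sqrt (1 + y^2) / (1 - x + y^2/2) < ε := by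
  have hε2 : 0 < ε^2 := by positivity
  have hD : (0:ℝ) < 1 - x + y^2/2 := by nlinarith [sq_nonneg y]
  rw [div_lt_iff₀ hD, show ε * (1 - x + y^2/2) = Real.sqrt ((ε * (1 - x + y^2/2))^2) from
    (Real.sqrt_sq (by positivity)).symm]
  apply Real.sqrt_lt_sqrt (by positivity)
  rcases le_or_gt 32 (ε^4 * x^2) with h | h
  · have ha : 4 ≤ ε^2 * (-x) := by
      nlinarith [mul_nonneg hε2.le (neg_nonneg.2 hx)]
    have ha' : (4:ℝ) ≤ -x := by nlinarith [mul_nonneg (neg_nonneg.2 hx) (sq_nonneg ε)]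
    have h1 : 4 * (-x) ≤ ε^2 * (-x) * (-x) :=
      mul_le_mul_of_nonneg_right ha (neg_nonneg.2 hx)
    have h2 : 4 * y^2 ≤ ε^2 * (-x) * y^2 :=
      mul_le_mul_of_nonneg_right ha (sq_nonneg y)
    have h3 : 0 ≤ ε^2 * (1 + (y^2/2)^2 + 2*(-x) + 2*(y^2/2)) := by positivity
    nlinarith [h1, h2, h3, ha']
  · have hy : 32 ≤ ε^4 * y^2 := by nlinarith [sq_nonneg x]
    have h1 : 32 ≤ ε^2 * y^2 := by
      nlinarith [mul_nonneg (mul_nonneg hε2.le (sub_nonneg.2 (by nlinarith : ε^2 ≤ 1))) (sq_nonneg y)]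
    have h32 : (32:ℝ) ≤ y^2 := by
      nlinarith [h1, mul_nonneg (sub_nonneg.2 (show ε^2 ≤ 1 by nlinarith)) (sq_nonneg y)]
    have h2 : 8 * y^2 ≤ ε^2 * y^2 * y^2 / 4 := by nlinarith [mul_le_mul_of_nonneg_right h1 (sq_nonneg y)]
    have h3 : 0 ≤ ε^2 * ((1-x)^2 + 2*(1-x)*(y^2/2)) := by
      have : (0:ℝ) ≤ 1 - x := by linarith
      positivity
    nlinarith [h2, h3, h32]

/-- Stiff decay of SI1(1): for any sequence `z n` in the closed left half-plane
with `|z n| → ∞`, the stability function values `R(z n)` tend to 0. -/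
theorem stmt_1 (z : ℕ → ℂ) (hre : ∀ n, (z n).re ≤ 0)
    (habs : Filter.Tendsto (fun n => ‖z n‖) Filter.atTop Filter.atTop) :
    Filter.Tendsto
      (fun n => ‖
        ((1 + Complex.I * ((z n).im : ℂ)) / ((1 : ℂ) - ((z n).re : ℂ) + ((z n).im : ℂ)^2 / 2))‖)
      Filter.atTop (nhds 0) := by
  rw [Metric.tendsto_atTop]
  intro ε hε0
  set ε' : ℝ := min ε 1 with hε'
  have hε'0 : 0 < ε' := lt_min hε0 one_pos
  have hε'1 : ε' ≤ 1 := min_le_right _ _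
  obtain ⟨N, hN⟩ := (habs.eventually_ge_atTop (8 / ε'^2)).exists_forall_of_atTop
  refine ⟨N, fun n hn => ?_⟩
  have hzn := hN n hn
  set x := (z n).re
  set y := (z n).im
  have hD : (0:ℝ) < 1 - x + y^2/2 := by nlinarith [sq_nonneg y, hre n]
  have habs1 : ‖(1 + Complex.I * (y:ℂ))‖ = Real.sqrt (1 + y^2) := by
    rw [Complex.norm_def, Complex.normSq_apply]
    simp [sq]
  have habs2 : ‖((1:ℂ) - (x:ℂ) + (y:ℂ)^2/2)‖ = 1 - x + y^2/2 := by
    have : ((1:ℂ) - (x:ℂ) + (y:ℂ)^2/2) = ((1 - x + y^2/2 : ℝ) : ℂ) := by push_cast; ring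
    rw [this, Complex.norm_real, Real.norm_eq_abs, abs_of_pos hD]
  rw [dist_zero_right, Real.norm_eq_abs, abs_of_nonneg (norm_nonneg _), norm_div,
    habs1, habs2]
  have hr : 64 ≤ ε'^4 * (x^2 + y^2) := by
    have h1 : (8 / ε'^2)^2 ≤ (‖z n‖)^2 := by
      exact pow_le_pow_left₀ (by positivity) hzn 2
    rw [Complex.sq_norm, Complex.normSq_apply] at h1
    have : (8/ε'^2)^2 = 64/ε'^4 := by rw [div_pow]; ring_nf
    rw [this, div_le_iff₀ (by positivity)] at h1
    nlinarith [h1]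
  calc Real.sqrt (1 + y^2) / (1 - x + y^2/2) < ε' := key x y ε' (hre n) hε'0 hε'1 hr
    _ ≤ ε := min_le_left _ _
end

section
/- Let R₁(z) = (1 + i z_i)/(1 - z_r + z_i²/2) and R₂(z) = (1 + i z_i R₁(z))/(1 - z_r + z_i²/2). Then for all z = z_r + i z_i with z_r ≤ 0, |R₂(z)| ≤ 1. -/
/-- A-stability of the two-stage integrator SI1(2). -/
theorem stmt_2 (z : ℂ) (hz : z.re ≤ 0)
    (R₁ : ℂ) (hR₁ : R₁ = (1 + Complex.I * (z.im : ℂ)) / ((1 : ℂ) - (z.re : ℂ) + (z.im : ℂ)^2 / 2)) :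
    ‖(1 + Complex.I * (z.im : ℂ) * R₁) / ((1 : ℂ) - (z.re : ℂ) + (z.im : ℂ)^2 / 2)‖ ≤ 1 := by
  set a := z.re with ha
  set b := z.im with hb
  set D : ℝ := 1 - a + b ^ 2 / 2 with hDdef
  have hD1 : (1 : ℝ) ≤ D := by rw [hDdef]; nlinarith [sq_nonneg b]
  have hDpos : (0 : ℝ) < D := by linarith
  have hDc : ((1 : ℂ) - (a : ℂ) + (b : ℂ) ^ 2 / 2) = (D : ℂ) := by push_cast [hDdef]; ring
  have hDne : (D : ℂ) ≠ 0 := by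
    exact_mod_cast Complex.ofReal_ne_zero.mpr (ne_of_gt hDpos)
  have hE : (1 + Complex.I * (b : ℂ) * R₁) / ((1 : ℂ) - (a : ℂ) + (b : ℂ) ^ 2 / 2)
      = (((D - b ^ 2 : ℝ) : ℂ) + (b : ℝ) * Complex.I) / (((D ^ 2 : ℝ)) : ℂ) := by
    rw [hR₁, hDc]
    push_cast
    field_simp
    ring_nf
    rw [Complex.I_sq]
    ring
  rw [hE, norm_div, Complex.norm_real, Real.norm_eq_abs, abs_of_pos (by positivity : (0:ℝ) < D ^ 2)]
  rw [div_le_one (by positivity)]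
  rw [Complex.norm_add_mul_I]
  calc Real.sqrt ((D - b ^ 2) ^ 2 + b ^ 2)
      ≤ Real.sqrt ((D ^ 2) ^ 2) := by
        apply Real.sqrt_le_sqrt
        have h1 : (0:ℝ) ≤ b ^ 2 * (1 - 2 * a) := by
          apply mul_nonneg (sq_nonneg b); linarith
        have h2 : (D - b ^ 2) ^ 2 + b ^ 2 ≤ D ^ 2 := by rw [hDdef] at *; nlinarith
        have hD2 : (1:ℝ) ≤ D ^ 2 := by nlinarith
        have h3 : D ^ 2 ≤ (D ^ 2) ^ 2 := by nlinarith [mul_nonneg (sq_nonneg D) (sub_nonneg.mpr hD2)]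
        linarith
    _ = D ^ 2 := Real.sqrt_sq (by positivity)
end

section
/- Let R₂ be the stability function of SI1(2) as defined by R₂(z) = (1 + i z_i R₁(z))/(1 - z_r + z_i²/2) with R₁(z) = (1 + i z_i)/(1 - z_r + z_i²/2). Then |R₂(z_n)| → 0 for any sequence z_n in the closed left half-plane with |z_n| → ∞. -/
lemma si12_key (R₁ R₂ : ℂ → ℂ)
    (hR₁ : ∀ w : ℂ, R₁ w = (1 + Complex.I * (w.im : ℂ)) / ((1 : ℂ) - (w.re : ℂ) + (w.im : ℂ)^2 / 2))
    (hR₂ : ∀ w : ℂ, R₂ w = (1 + Complex.I * (w.im : ℂ) * R₁ w) / ((1 : ℂ) - (w.re : ℂ) + (w.im : ℂ)^2 / 2))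
    (w : ℂ) (hw : w.re ≤ 0) :
    ‖R₂ w‖ ≤ 4 / (1/2 + ‖w‖) := by
  obtain ⟨d, hdd⟩ : ∃ d : ℝ, d = 1 - w.re + w.im^2/2 := ⟨_, rfl⟩
  have hd : (0:ℝ) < d := by rw [hdd]; nlinarith [sq_nonneg w.im]
  have hcast : ((1:ℂ) - (w.re:ℂ) + (w.im:ℂ)^2/2) = (d:ℂ) := by rw [hdd]; push_cast; ring
  have habsd : ‖(1:ℂ) - (w.re:ℂ) + (w.im:ℂ)^2/2‖ = d := by
    rw [hcast, Complex.norm_real, Real.norm_eq_abs]; exact abs_of_pos hd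
  have hnum1 : ‖1 + Complex.I * (w.im:ℂ)‖ ≤ 1 + |w.im| := by
    calc ‖1 + Complex.I * (w.im:ℂ)‖
        ≤ ‖1‖ + ‖Complex.I * (w.im:ℂ)‖ := norm_add_le _ _
      _ = 1 + |w.im| := by simp
  have hR1abs : ‖R₁ w‖ ≤ (1 + |w.im|) / d := by
    rw [hR₁ w, norm_div, habsd]
    exact div_le_div_of_nonneg_right hnum1 hd.le
  have hnum2 : ‖1 + Complex.I * (w.im:ℂ) * R₁ w‖ ≤ 1 + |w.im| * ((1 + |w.im|) / d) := by
    calc ‖1 + Complex.I * (w.im:ℂ) * R₁ w‖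
        ≤ ‖1‖ + ‖Complex.I * (w.im:ℂ) * R₁ w‖ := norm_add_le _ _
      _ = 1 + |w.im| * ‖R₁ w‖ := by simp [mul_assoc]
      _ ≤ 1 + |w.im| * ((1 + |w.im|) / d) := by gcongr
  have hR2abs : ‖R₂ w‖ ≤ (1 + |w.im| * ((1 + |w.im|) / d)) / d := by
    rw [hR₂ w, norm_div, habsd]
    exact div_le_div_of_nonneg_right hnum2 hd.le
  have habsw : ‖w‖ ≤ -w.re + |w.im| := by
    have := Complex.norm_le_abs_re_add_abs_im w
    rwa [abs_of_nonpos hw] at this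
  have hwd : 1/2 + ‖w‖ ≤ d := by
    rw [hdd]; nlinarith [sq_nonneg (|w.im| - 1), abs_nonneg w.im, sq_abs w.im, habsw]
  have hwpos : (0:ℝ) < 1/2 + ‖w‖ := by positivity
  have hbound : (1 + |w.im| * ((1 + |w.im|) / d)) / d ≤ 4 / d := by
    apply div_le_div_of_nonneg_right _ hd.le
    have h3 : |w.im| * (1 + |w.im|) ≤ 3 * d := by
      rw [hdd]; nlinarith [sq_nonneg (|w.im| - 1), abs_nonneg w.im, sq_abs w.im, habsw]
    rw [mul_div_assoc']
    have : |w.im| * (1 + |w.im|) / d ≤ 3 := by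
      rw [div_le_iff₀ hd]; linarith
    linarith
  calc ‖R₂ w‖ ≤ 4 / d := hR2abs.trans hbound
    _ ≤ 4 / (1/2 + ‖w‖) := by
        exact div_le_div_of_nonneg_left (by norm_num) hwpos hwd

/-- Stiff decay (L-stability part) of the two-stage integrator SI1(2):
`|R₂(z n)| → 0` along any sequence in the closed left half-plane with `|z n| → ∞`. -/
theorem stmt_3 (z : ℕ → ℂ) (hre : ∀ n, (z n).re ≤ 0)
    (habs : Filter.Tendsto (fun n => ‖z n‖) Filter.atTop Filter.atTop)
    (R₁ R₂ : ℂ → ℂ)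
    (hR₁ : ∀ w : ℂ, R₁ w = (1 + Complex.I * (w.im : ℂ)) / ((1 : ℂ) - (w.re : ℂ) + (w.im : ℂ)^2 / 2))
    (hR₂ : ∀ w : ℂ, R₂ w = (1 + Complex.I * (w.im : ℂ) * R₁ w) / ((1 : ℂ) - (w.re : ℂ) + (w.im : ℂ)^2 / 2)) :
    Filter.Tendsto (fun n => ‖R₂ (z n)‖) Filter.atTop (nhds 0) := by
  have hg : Filter.Tendsto (fun n => 4 / (1/2 + ‖z n‖)) Filter.atTop (nhds 0) := by
    apply Filter.Tendsto.div_atTop tendsto_const_nhds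
    exact Filter.tendsto_atTop_add_const_left _ _ habs
  exact squeeze_zero (fun n => norm_nonneg _) (fun n => si12_key R₁ R₂ hR₁ hR₂ (z n) (hre n)) hg
end

section
/- Let R₂₁(z) = (1 + (i/2) z_i)/(1 - z_r/2 + z_i²/4) and R₂₂(z) = 1 + z·(1 + (i/2) z_i R₂₁(z))/(1 - z_r/2 + z_i²/4). Then |R₂₂(z)| ≤ 1 for all z = z_r + i z_i with z_r ≤ 0. -/
/-- A-stability of the second-order two-stage integrator SI2(2). -/
theorem stmt_4 (z : ℂ) (hz : z.re ≤ 0)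
    (R₂₁ : ℂ)
    (hR₂₁ : R₂₁ = (1 + (Complex.I / 2) * (z.im : ℂ)) / ((1 : ℂ) - (z.re : ℂ) / 2 + (z.im : ℂ)^2 / 4)) :
    ‖
      (1 + z * (1 + (Complex.I / 2) * (z.im : ℂ) * R₂₁) /
        ((1 : ℂ) - (z.re : ℂ) / 2 + (z.im : ℂ)^2 / 4))‖ ≤ 1 := by
  subst hR₂₁
  set a := z.re with ha
  set b := z.im with hb
  have hD : (0:ℝ) < 1 - a/2 + b^2/4 := by nlinarith [sq_nonneg b]
  set D : ℝ := 1 - a/2 + b^2/4 with hDdef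
  have hcast : ((1:ℂ) - (a:ℂ)/2 + (b:ℂ)^2/4) = (D:ℂ) := by
    rw [hDdef]; push_cast; ring
  have hDne : (D:ℂ) ≠ 0 := by exact_mod_cast hD.ne'
  have hz' : z = (a:ℂ) + (b:ℂ)*Complex.I := (Complex.re_add_im z).symm
  have key : (1 + z * (1 + (Complex.I / 2) * (b : ℂ) *
        ((1 + (Complex.I / 2) * (b : ℂ)) / ((1 : ℂ) - (a : ℂ) / 2 + (b : ℂ)^2 / 4))) /
        ((1 : ℂ) - (a : ℂ) / 2 + (b : ℂ)^2 / 4)) =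
      (((D^2 + a - (a^2+b^2)/2 : ℝ) : ℂ) + (b:ℝ)*Complex.I)/((D:ℂ)^2) := by
    rw [hcast, hz']
    have hI3 : Complex.I ^ 3 = -Complex.I := by
      rw [pow_succ, Complex.I_sq]; ring
    field_simp
    push_cast [hDdef]
    ring_nf
    simp only [hI3, Complex.I_sq]
    ring
  rw [key, norm_div]
  have habs2 : ‖(D:ℂ)^2‖ = D^2 := by
    rw [norm_pow, Complex.norm_real, Real.norm_eq_abs, abs_of_pos hD]
  rw [habs2, div_le_one (by positivity)]
  have hnum : ‖(((D^2 + a - (a^2+b^2)/2 : ℝ) : ℂ) + (b:ℝ)*Complex.I)‖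
      = Real.sqrt ((D^2 + a - (a^2+b^2)/2)^2 + b^2) := by
    rw [Complex.norm_add_mul_I]
  rw [hnum]
  have hineq : (D^2 + a - (a^2+b^2)/2)^2 + b^2 ≤ (D^2)^2 := by
    have hs : 0 ≤ -a := by linarith
    have hM : 0 ≤ -a + a^2/2 + b^2/2 := by nlinarith [sq_nonneg a, sq_nonneg b]
    simp only [hDdef]
    nlinarith [sq_nonneg a, sq_nonneg b, sq_nonneg (a*b), sq_nonneg (b^2),
      mul_nonneg hM hs, mul_nonneg hs (sq_nonneg b),
      mul_nonneg (mul_nonneg hM hs) (sq_nonneg b),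
      mul_nonneg hM (sq_nonneg (b^2))]
  calc Real.sqrt ((D^2 + a - (a^2+b^2)/2)^2 + b^2) ≤ Real.sqrt ((D^2)^2) :=
        Real.sqrt_le_sqrt hineq
    _ = D^2 := Real.sqrt_sq (by positivity)
end

section
/- The stability function R₂₁(z) = (1 + (i/2) z_i)/(1 - z_r/2 + z_i²/4) of the first stage of SI2(2) satisfies |R₂₁(z)| ≤ 1 for all z = z_r + i z_i with z_r ≤ 0. -/
/-- A-stability of the half-step method SI2(1). -/
theorem stmt_5 (z : ℂ) (hz : z.re ≤ 0) :
    ‖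
      ((1 + (Complex.I / 2) * (z.im : ℂ)) / ((1 : ℂ) - (z.re : ℂ) / 2 + (z.im : ℂ)^2 / 4))‖ ≤ 1 := by
  set a := z.re
  set b := z.im
  have hden : ((1 : ℂ) - (a : ℂ) / 2 + (b : ℂ)^2 / 4) = ((1 - a/2 + b^2/4 : ℝ) : ℂ) := by
    push_cast; ring
  have hdpos : (0:ℝ) < 1 - a/2 + b^2/4 := by nlinarith [sq_nonneg b]
  rw [norm_div, hden, Complex.norm_real, Real.norm_eq_abs, abs_of_pos hdpos,
    div_le_one hdpos]
  have h1 : ‖(1 + (Complex.I / 2) * (b : ℂ))‖ =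
      Real.sqrt (1 + b^2/4) := by
    rw [Complex.norm_def, Complex.normSq_apply]
    simp [Complex.add_re, Complex.add_im, Complex.mul_re, Complex.mul_im,
      Complex.div_re, Complex.div_im, Complex.I_re, Complex.I_im, Complex.normSq]
    ring_nf
  rw [h1]
  rw [show (1 - a/2 + b^2/4 : ℝ) = Real.sqrt ((1 - a/2 + b^2/4)^2) from
    (Real.sqrt_sq hdpos.le).symm]
  apply Real.sqrt_le_sqrt
  nlinarith [sq_nonneg b, sq_nonneg (a/2), sq_nonneg (b^2/4), mul_nonneg (neg_nonneg.2 hz) (sq_nonneg b)]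
end

section
/- On the imaginary axis z = i z_i (z_r = 0), the SI1(1) stability function satisfies |R(i z_i)|² = (1 + z_i²)/(1 + z_i²/2)² ≤ 1 for all real z_i, with equality if and only if z_i = 0. -/
/-- On the imaginary axis, `|R(I*zi)|² = (1+zi²)/(1+zi²/2)² ≤ 1`,
with equality iff `zi = 0`. -/
theorem stmt_6 (zi : ℝ) :
    (‖(1 + Complex.I * (zi : ℂ)) / ((1 : ℂ) + (zi : ℂ)^2 / 2)‖)^2
      = (1 + zi^2) / (1 + zi^2/2)^2 ∧
    (1 + zi^2) / (1 + zi^2/2)^2 ≤ 1 ∧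
    ((1 + zi^2) / (1 + zi^2/2)^2 = 1 ↔ zi = 0) := by
  have hd : (0:ℝ) < 1 + zi^2/2 := by positivity
  refine ⟨?_, ?_, ?_⟩
  · rw [norm_div, div_pow, Complex.sq_norm, Complex.sq_norm]
    congr 1
    · simp [Complex.normSq_apply]; ring
    · simp [Complex.normSq_apply, Complex.add_re, Complex.add_im,
        ← Complex.ofReal_pow]
      ring
  · rw [div_le_one (by positivity)]
    nlinarith [sq_nonneg zi, sq_nonneg (zi^2)]
  · rw [div_eq_one_iff_eq (by positivity)]
    constructor
    · intro h
      have : zi^2 * zi^2 = 0 := by nlinarith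
      have h2 : zi^2 = 0 := by nlinarith [sq_nonneg (zi^2)]
      exact pow_eq_zero_iff (n:=2) (by norm_num) |>.mp h2
    · intro h; simp [h]
end

section
/- For the modified semi-implicit Lax–Wendroff scheme applied to û' = iλ_i û (pure convection, λ_r = 0), the amplification factor R satisfies |R(i z_i)| < 1 for every nonzero real z_i; hence the scheme is unconditionally stable for linear convection with constant velocity. -/
/-- For pure convection the amplification factor of the modified semi-implicit
Lax–Wendroff scheme satisfies `|R(I*zi)| < 1` for every nonzero real `zi`. -/
theorem stmt_12 (zi : ℝ) (hzi : zi ≠ 0) :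
    ‖(1 + Complex.I * (zi : ℂ)) / ((1 : ℂ) + (zi : ℂ)^2 / 2)‖ < 1 := by
  have hnum : ‖1 + Complex.I * (zi : ℂ)‖ ^ 2 = 1 + zi ^ 2 := by
    rw [Complex.sq_norm, Complex.normSq_apply]
    simp [Complex.add_re, Complex.add_im]
    ring
  have hden : ((1 : ℂ) + (zi : ℂ)^2 / 2) = ((1 + zi ^ 2 / 2 : ℝ) : ℂ) := by
    push_cast; ring
  have hpos : (0 : ℝ) < 1 + zi ^ 2 / 2 := by positivity
  rw [norm_div, hden, Complex.norm_real, Real.norm_eq_abs, abs_of_pos hpos,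
    div_lt_one hpos]
  have h1 : ‖1 + Complex.I * (zi : ℂ)‖ ^ 2 < (1 + zi ^ 2 / 2) ^ 2 := by
    rw [hnum]
    have : zi ^ 2 > 0 := by positivity
    nlinarith
  have h0 : (0 : ℝ) ≤ ‖1 + Complex.I * (zi : ℂ)‖ := by positivity
  nlinarith
end
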